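/- arXiv:1908.05654 — 2 statements merged into one kernel-verified Lean document; each statement's English description precedes it below -/
import Mathlib

section
/- There exists a constant C > 0 such that for every bounded measurable f : [0,1] → ℝ, every t ∈ (0,1] and all x, x' ∈ [0,1], |P_t f(x) − P_t f(x')| ≤ C t^{-1/2} ‖f‖_∞ |x − x'| (smoothing estimate for the Neumann heat semigroup). -/
/-!
Method of images: summing the images over `n` turns `P_t f x` into the full-line integral
`∫ g_t (x + z) f̃ z dz`, where `f̃ = f ∘ triangleWave` is the even `2`-periodic extension of `f`,
so `|P_t f x - P_t f x'| ≤ M ∫ |g_t (x + z) - g_t (x' + z)| dz`. For an integrable even `g`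
decreasing on `[0, ∞)`, the difference `g (x + z) - g (x' + z)` changes sign only at the midpoint
of `-x` and `-x'`, and on each side its integral telescopes to an integral of `g` over an interval
of length `|x - x'|`. This bounds the right side by `2 g(0) |x - x'|`, and
`g_t 0 = (2πt)^{-1/2} ≤ t^{-1/2}`.
-/

open MeasureTheory Real

/-- Centered Gaussian density with variance `t`. -/
noncomputable def gaussD (t x : ℝ) : ℝ :=
  (2 * Real.pi * t) ^ (-(1:ℝ)/2) * Real.exp (-x ^ 2 / (2 * t))

/-- The Neumann heat kernel on `[0,1]` (transition density of reflected BM). -/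
noncomputable def heatK (t x y : ℝ) : ℝ :=
  ∑' n : ℤ, (gaussD t (x - y + 2 * (n : ℝ)) + gaussD t (x + y + 2 * (n : ℝ)))

/-- The Neumann heat semigroup: `P_t f(x) = ∫₀¹ p(t,x,y) f(y) dy` for `t > 0`,
and `P_0 f = f`. -/
noncomputable def Pt (t : ℝ) (f : ℝ → ℝ) (x : ℝ) : ℝ :=
  if t = 0 then f x else ∫ y in (0:ℝ)..1, heatK t x y * f y

open Set
open scoped Interval

lemma integral_comp_add_left_Ioi (g : ℝ → ℝ) (c m : ℝ) :
    ∫ z in Ioi m, g (c + z) = ∫ z in Ioi (c + m), g z := by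
  have h := (measurePreserving_add_left volume c).setIntegral_preimage_emb
    (measurableEmbedding_addLeft c) g (Ioi (c + m))
  rwa [preimage_const_add_Ioi, add_sub_cancel_left] at h

section EvenAntitone

variable {g : ℝ → ℝ}

lemma Function.Even.apply_le_apply_of_abs_le (heven : g.Even) (hanti : AntitoneOn g (Ici 0))
    {u v : ℝ} (h : |u| ≤ |v|) : g v ≤ g u := by
  have habs : ∀ w, g |w| = g w := fun w => by
    rcases abs_choice w with hw | hw <;> rw [hw]; exact heven w
  rw [← habs u, ← habs v]
  exact hanti (abs_nonneg u) (abs_nonneg v) h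

lemma setIntegral_Ioi_abs_sub_comp_add_le (hint : Integrable g) (heven : g.Even)
    (hanti : AntitoneOn g (Ici 0)) {a b : ℝ} (hba : b ≤ a) :
    ∫ z in Ioi (-(a + b) / 2), |g (a + z) - g (b + z)| ≤ g 0 * (a - b) := by
  set m := -(a + b) / 2 with hm
  have hle : ∀ z ∈ Ioi m, g (a + z) ≤ g (b + z) := fun z hz =>
    heven.apply_le_apply_of_abs_le hanti
      (abs_le.2 ⟨by linarith [mem_Ioi.1 hz], by linarith⟩ |>.trans (le_abs_self _))
  have hshift : ∀ c, IntegrableOn (fun z => g (c + z)) (Ioi m) :=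
    fun c => (hint.comp_add_left c).integrableOn
  calc ∫ z in Ioi m, |g (a + z) - g (b + z)|
      = (∫ z in Ioi m, g (b + z)) - ∫ z in Ioi m, g (a + z) := by
        rw [← integral_sub (hshift b) (hshift a)]
        refine setIntegral_congr_fun measurableSet_Ioi fun z hz => ?_
        rw [abs_sub_comm, abs_of_nonneg (sub_nonneg.2 (hle z hz))]
    _ = ∫ u in (b + m)..(a + m), g u := by
        rw [integral_comp_add_left_Ioi, integral_comp_add_left_Ioi,
          ← integral_Ici_eq_integral_Ioi, ← integral_Ici_eq_integral_Ioi,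
          intervalIntegral.integral_Ici_sub_Ici' hint.integrableOn hint.integrableOn]
    _ ≤ ∫ _ in (b + m)..(a + m), g 0 :=
        intervalIntegral.integral_mono_on (by linarith) hint.intervalIntegrable
          intervalIntegrable_const fun u _ => heven.apply_le_apply_of_abs_le hanti (by simp)
    _ = g 0 * (a - b) := by simp; ring

lemma integral_abs_sub_comp_add_le (hint : Integrable g) (heven : g.Even)
    (hanti : AntitoneOn g (Ici 0)) (a b : ℝ) :
    ∫ z, |g (a + z) - g (b + z)| ≤ 2 * g 0 * |a - b| := by
  wlog hba : b ≤ a generalizing a b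
  · simpa only [abs_sub_comm] using this b a (le_of_not_ge hba)
  set m := -(a + b) / 2
  have hdiff : Integrable fun z => |g (a + z) - g (b + z)| :=
    ((hint.comp_add_left a).sub (hint.comp_add_left b)).abs
  have hreflect : ∫ z in Iic m, |g (a + z) - g (b + z)|
      = ∫ z in Ioi (-(-b + -a) / 2), |g (-b + z) - g (-a + z)| := by
    rw [show -(-b + -a) / 2 = -m by ring, ← integral_comp_neg_Iic]
    refine setIntegral_congr_fun measurableSet_Iic fun z _ => ?_
    rw [abs_sub_comm, ← heven (a + z), ← heven (b + z)]
    ring_nf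
  rw [← intervalIntegral.integral_Iic_add_Ioi hdiff.integrableOn hdiff.integrableOn, hreflect,
    abs_of_nonneg (sub_nonneg.2 hba)]
  linarith [setIntegral_Ioi_abs_sub_comp_add_le hint heven hanti hba,
    setIntegral_Ioi_abs_sub_comp_add_le hint heven hanti (neg_le_neg hba)]

end EvenAntitone

lemma hasSum_intervalIntegral_comp_add_two_mul {F : ℝ → ℝ} (hF : Integrable F) :
    HasSum (fun n : ℤ => ∫ u in (-1 : ℝ)..1, F (u + 2 * n)) (∫ z, F z) := by
  have h := hasSum_integral_iUnion (μ := volume) (f := F)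
    (fun n : ℤ => measurableSet_Ioc) (pairwise_disjoint_Ioc_add_zsmul (-1 : ℝ) 2)
    hF.integrableOn
  rw [iUnion_Ioc_add_zsmul two_pos, Measure.restrict_univ] at h
  have hpiece : ∀ n : ℤ, ∫ z in Ioc (-1 + n • (2 : ℝ)) (-1 + (n + 1) • 2), F z
      = ∫ u in (-1 : ℝ)..1, F (u + 2 * n) := fun n => by
    rw [← intervalIntegral.integral_of_le (by simp),
      intervalIntegral.integral_comp_add_right]
    congr 1 <;> simp <;> ring
  simpa only [hpiece] using h

lemma integral_neg_self_eq_integral_comp_neg_add {φ : ℝ → ℝ} {a : ℝ}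
    (hφ : IntervalIntegrable φ volume (-a) a) :
    ∫ u in -a..a, φ u = ∫ y in (0 : ℝ)..a, (φ (-y) + φ y) := by
  have h0 : (0 : ℝ) ∈ [[-a, a]] := mem_uIcc.2 (by
    rcases le_total 0 a with h | h <;> [left; right] <;> constructor <;> linarith)
  have hleft : IntervalIntegrable φ volume (-a) 0 := hφ.mono_set (uIcc_subset_uIcc_left h0)
  have hright : IntervalIntegrable φ volume 0 a := hφ.mono_set (uIcc_subset_uIcc_right h0)
  rw [← intervalIntegral.integral_add_adjacent_intervals hleft hright,
    intervalIntegral.integral_add _ hright, intervalIntegral.integral_comp_neg, neg_zero]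
  simpa using ((IntervalIntegrable.iff_comp_neg).mp hleft).symm

section Gaussian

variable {t : ℝ}

lemma gaussD_nonneg (ht : 0 ≤ t) (x : ℝ) : 0 ≤ gaussD t x := by
  unfold gaussD
  positivity

lemma continuous_gaussD : Continuous (gaussD t) := by
  unfold gaussD
  fun_prop

lemma gaussD_even : (gaussD t).Even := fun x => by
  simp [gaussD]

lemma antitoneOn_gaussD (ht : 0 ≤ t) : AntitoneOn (gaussD t) (Ici 0) := by
  intro u hu v _ huv
  unfold gaussD
  gcongr

lemma integrable_gaussD (ht : 0 < t) : Integrable (gaussD t) := by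
  have h := (integrable_exp_neg_mul_sq (b := 1 / (2 * t)) (by positivity)).const_mul
    ((2 * π * t) ^ (-(1:ℝ)/2))
  convert h using 2 with x
  rw [gaussD]
  ring_nf

lemma gaussD_zero_le (ht : 0 < t) : gaussD t 0 ≤ t ^ (-(1:ℝ)/2) := by
  have h : t ≤ 2 * π * t := by nlinarith [pi_gt_three]
  simpa [gaussD] using rpow_le_rpow_of_nonpos ht h (by norm_num)

end Gaussian

noncomputable def triangleWave (z : ℝ) : ℝ := |z - 2 * round (z / 2)|

lemma triangleWave_mem_Icc (z : ℝ) : triangleWave z ∈ Icc (0 : ℝ) 1 := by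
  have h := abs_sub_round (z / 2)
  refine ⟨abs_nonneg _, ?_⟩
  rw [triangleWave, show z - 2 * round (z / 2) = 2 * (z / 2 - round (z / 2)) by ring, abs_mul,
    abs_two]
  linarith

lemma measurable_triangleWave : Measurable triangleWave := by
  have hround : Measurable fun z : ℝ => ((round (z / 2) : ℤ) : ℝ) := by
    simp_rw [round_eq]
    exact measurable_from_top.comp (Int.measurable_floor.comp (by fun_prop))
  unfold triangleWave
  fun_prop

lemma triangleWave_add_two_mul_intCast {y : ℝ} (hy : y ∈ Icc (0 : ℝ) 1) (n : ℤ) :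
    triangleWave (y + 2 * n) = y := by
  rcases hy.2.lt_or_eq with hy1 | rfl
  · have hround : round (y / 2) = 0 := by
      rw [round_eq, Int.floor_eq_zero_iff]
      constructor <;> linarith [hy.1]
    rw [triangleWave, show (y + 2 * n) / 2 = y / 2 + n by ring, round_add_intCast, hround]
    simpa using hy.1
  · have hround : round ((1 : ℝ) / 2) = 1 := by norm_num [round_eq]
    rw [triangleWave, show (1 + 2 * n) / 2 = 1 / 2 + (n : ℝ) by ring, round_add_intCast, hround]
    push_cast
    rw [show (1 : ℝ) + 2 * n - 2 * (1 + n) = -1 by ring, abs_neg, abs_one]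

lemma triangleWave_neg_add_two_mul_intCast {y : ℝ} (hy : y ∈ Icc (0 : ℝ) 1) (n : ℤ) :
    triangleWave (-y + 2 * n) = y := by
  have hround : round (-y / 2) = 0 := by
    rw [round_eq, Int.floor_eq_zero_iff]
    constructor <;> linarith [hy.1, hy.2]
  rw [triangleWave, show (-y + 2 * n) / 2 = -y / 2 + n by ring, round_add_intCast, hround]
  simpa using hy.1

section MethodOfImages

variable {t M : ℝ} {f : ℝ → ℝ}

lemma integrable_gaussD_mul_comp_triangleWave (ht : 0 < t) (hf : Measurable f)
    (hM : ∀ y ∈ Icc (0 : ℝ) 1, |f y| ≤ M) (x : ℝ) :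
    Integrable fun z => gaussD t (x + z) * f (triangleWave z) := by
  refine (((integrable_gaussD ht).comp_add_left x).mul_const M).mono'
    ((continuous_gaussD.measurable.comp (measurable_const_add x)).mul
      (hf.comp measurable_triangleWave)).aestronglyMeasurable (ae_of_all _ fun z => ?_)
  rw [norm_mul, Real.norm_of_nonneg (gaussD_nonneg ht.le _)]
  exact mul_le_mul_of_nonneg_left (hM _ (triangleWave_mem_Icc z)) (gaussD_nonneg ht.le _)

lemma hasSum_integral_heatK_terms (ht : 0 < t) (hf : Measurable f)
    (hM : ∀ y ∈ Icc (0 : ℝ) 1, |f y| ≤ M) (x : ℝ) :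
    HasSum (fun n : ℤ => ∫ y in (0 : ℝ)..1,
        (gaussD t (x - y + 2 * n) + gaussD t (x + y + 2 * n)) * f y)
      (∫ z, gaussD t (x + z) * f (triangleWave z)) := by
  have hF := integrable_gaussD_mul_comp_triangleWave ht hf hM x
  have hterm : ∀ n : ℤ,
      ∫ u in (-1 : ℝ)..1, gaussD t (x + (u + 2 * n)) * f (triangleWave (u + 2 * n))
        = ∫ y in (0 : ℝ)..1, (gaussD t (x - y + 2 * n) + gaussD t (x + y + 2 * n)) * f y := by
    intro n
    rw [integral_neg_self_eq_integral_comp_neg_add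
      ((hF.comp_add_right (2 * n)).intervalIntegrable)]
    refine intervalIntegral.integral_congr fun y hy => ?_
    rw [uIcc_of_le zero_le_one] at hy
    simp only [triangleWave_add_two_mul_intCast hy, triangleWave_neg_add_two_mul_intCast hy]
    ring_nf
  simpa only [hterm] using hasSum_intervalIntegral_comp_add_two_mul hF

lemma integral_heatK_mul_eq (ht : 0 < t) (hf : Measurable f)
    (hM : ∀ y ∈ Icc (0 : ℝ) 1, |f y| ≤ M) (x : ℝ) :
    ∫ y in (0 : ℝ)..1, heatK t x y * f y = ∫ z, gaussD t (x + z) * f (triangleWave z) := by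
  set k : ℤ → ℝ → ℝ := fun n y => gaussD t (x - y + 2 * n) + gaussD t (x + y + 2 * n)
  have hk_nonneg : ∀ n y, 0 ≤ k n y := fun n y =>
    add_nonneg (gaussD_nonneg ht.le _) (gaussD_nonneg ht.le _)
  have hk_cont : ∀ n, Continuous (k n) := fun n =>
    (continuous_gaussD.comp (by fun_prop)).add (continuous_gaussD.comp (by fun_prop))
  have hfI : IntegrableOn f (Icc 0 1) :=
    Measure.integrableOn_of_bounded measure_Icc_lt_top.ne hf.aestronglyMeasurable
      ((ae_restrict_iff' measurableSet_Icc).2 (ae_of_all _ hM))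
  have hterm_int : ∀ n, IntegrableOn (fun y => k n y * f y) (Ioc 0 1) := fun n =>
    (hfI.continuousOn_mul (hk_cont n).continuousOn isCompact_Icc).mono_set Ioc_subset_Icc_self
  have hsummable : Summable fun n => ∫ y in Ioc 0 1, ‖k n y * f y‖ := by
    simpa [intervalIntegral.integral_of_le, norm_mul, abs_of_nonneg (hk_nonneg _ _)] using
      (hasSum_integral_heatK_terms ht hf.abs (by simpa using hM) x).summable
  rw [intervalIntegral.integral_of_le zero_le_one]
  simp_rw [heatK, ← tsum_mul_right]
  rw [← integral_tsum_of_summable_integral_norm hterm_int hsummable]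
  simpa [intervalIntegral.integral_of_le] using (hasSum_integral_heatK_terms ht hf hM x).tsum_eq

lemma Pt_eq_integral (ht : 0 < t) (hf : Measurable f) (hM : ∀ y ∈ Icc (0 : ℝ) 1, |f y| ≤ M)
    (x : ℝ) : Pt t f x = ∫ z, gaussD t (x + z) * f (triangleWave z) := by
  rw [Pt, if_neg ht.ne', integral_heatK_mul_eq ht hf hM]

lemma abs_Pt_sub_le (ht : 0 < t) (hf : Measurable f) (hM : ∀ y ∈ Icc (0 : ℝ) 1, |f y| ≤ M)
    (x x' : ℝ) :
    |Pt t f x - Pt t f x'| ≤ M * ∫ z, |gaussD t (x + z) - gaussD t (x' + z)| := by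
  rw [Pt_eq_integral ht hf hM, Pt_eq_integral ht hf hM,
    ← integral_sub (integrable_gaussD_mul_comp_triangleWave ht hf hM x)
      (integrable_gaussD_mul_comp_triangleWave ht hf hM x'), ← integral_const_mul,
    ← Real.norm_eq_abs]
  refine norm_integral_le_of_norm_le ((((integrable_gaussD ht).comp_add_left x).sub
    ((integrable_gaussD ht).comp_add_left x')).abs.const_mul M) (ae_of_all _ fun z => ?_)
  rw [← sub_mul, norm_mul, Real.norm_eq_abs, mul_comm]
  gcongr
  exact hM _ (triangleWave_mem_Icc z)

end MethodOfImages

/-- smoothing estimate for the Neumann heat semigroup: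
`|P_t f(x) − P_t f(x')| ≤ C t^{-1/2} ‖f‖_∞ |x − x'|` for `t ∈ (0,1]`. -/
theorem heat_semigroup_smoothing_estimate :
    ∃ C > (0:ℝ), ∀ f : ℝ → ℝ, Measurable f → ∀ M : ℝ,
      (∀ y ∈ Set.Icc (0:ℝ) 1, |f y| ≤ M) →
      ∀ t ∈ Set.Ioc (0:ℝ) 1, ∀ x ∈ Set.Icc (0:ℝ) 1, ∀ x' ∈ Set.Icc (0:ℝ) 1,
        |Pt t f x - Pt t f x'| ≤ C * t ^ (-(1:ℝ)/2) * M * |x - x'| := by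
  refine ⟨2, two_pos, fun f hf M hM t ht x _ x' _ => ?_⟩
  have hM0 : 0 ≤ M := (abs_nonneg _).trans (hM 0 ⟨le_rfl, zero_le_one⟩)
  calc |Pt t f x - Pt t f x'|
      ≤ M * ∫ z, |gaussD t (x + z) - gaussD t (x' + z)| := abs_Pt_sub_le ht.1 hf hM x x'
    _ ≤ M * (2 * gaussD t 0 * |x - x'|) := by
        gcongr
        exact integral_abs_sub_comp_add_le (integrable_gaussD ht.1) gaussD_even
          (antitoneOn_gaussD ht.1.le) x x'
    _ ≤ 2 * t ^ (-(1:ℝ)/2) * M * |x - x'| := by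
        rw [mul_comm M, mul_right_comm _ M]
        gcongr
        exact gaussD_zero_le ht.1
end

section
/- For every continuous f : [0,1] → ℝ, P_t f converges to f uniformly on [0,1] as t → 0+; that is, sup_{x∈[0,1]} |P_t f(x) − f(x)| → 0 as t ↓ 0 (strong continuity of the Neumann heat semigroup on C([0,1])). -/
open MeasureTheory Real

/-!
By the method of images, `P_t f x = ∫ g_t(u) F(x - u) du`, where `F = f ∘ fold` is the even
`2`-periodic extension of `f`: the window of length `2` around `x + 2n` contributes exactly the
`n`-th pair of image terms of the kernel. If `|F| ≤ M` and `η` is a modulus of uniform continuity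
of `F` for `ε / 2`, then `|F (x - u) - F x| ≤ ε / 2 + 2 M u² / η²`; integrating against the
Gaussian of variance `t` gives `|P_t f x - f x| ≤ ε / 2 + 2 M t / η²` uniformly in `x`.
-/

open Set

/-- The distance to `2ℤ`, which folds `ℝ` onto `[0, 1]`. -/
noncomputable def fold (u : ℝ) : ℝ := |u - 2 * round (u / 2)|

lemma fold_le_abs_sub (u : ℝ) (n : ℤ) : fold u ≤ |u - 2 * n| := by
  have h := round_le (u / 2) n
  rw [fold, show u - 2 * (round (u / 2) : ℝ) = 2 * (u / 2 - round (u / 2)) by ring,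
    show u - 2 * (n : ℝ) = 2 * (u / 2 - n) by ring, abs_mul, abs_mul]
  gcongr

lemma fold_mem_Icc (u : ℝ) : fold u ∈ Icc (0 : ℝ) 1 := by
  have h := abs_sub_round (u / 2)
  refine ⟨abs_nonneg _, ?_⟩
  rw [fold, show u - 2 * (round (u / 2) : ℝ) = 2 * (u / 2 - round (u / 2)) by ring, abs_mul]
  norm_num
  linarith

lemma lipschitzWith_fold : LipschitzWith 1 fold := by
  refine LipschitzWith.of_le_add fun a b => ?_
  calc fold a ≤ |a - 2 * round (b / 2)| := fold_le_abs_sub a _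
    _ ≤ |a - b| + fold b := abs_sub_le a b _
    _ = fold b + dist a b := by rw [add_comm, Real.dist_eq]

lemma fold_add_two_mul_int (u : ℝ) (n : ℤ) : fold (u + 2 * n) = fold u := by
  rw [fold, fold, show (u + 2 * n) / 2 = u / 2 + n by ring, round_add_intCast]
  push_cast
  ring_nf

lemma fold_neg (u : ℝ) : fold (-u) = fold u := by
  have key : ∀ v, fold (-v) ≤ fold v := fun v =>
    calc fold (-v) ≤ |-v - 2 * ((-round (v / 2) : ℤ) : ℝ)| := fold_le_abs_sub _ _
      _ = fold v := by rw [fold, ← abs_neg]; push_cast; ring_nf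
  exact le_antisymm (key u) (by simpa using key (-u))

lemma fold_of_mem_Icc {y : ℝ} (hy : y ∈ Icc (0 : ℝ) 1) : fold y = y := by
  refine le_antisymm (by simpa [abs_of_nonneg hy.1] using fold_le_abs_sub y 0) ?_
  rcases le_or_gt (round (y / 2)) 0 with hn | hn
  · have : (round (y / 2) : ℝ) ≤ 0 := by exact_mod_cast hn
    exact (by linarith : y ≤ y - 2 * round (y / 2)).trans (le_abs_self _)
  · have : (1 : ℝ) ≤ round (y / 2) := by exact_mod_cast hn
    exact (by linarith [hy.2] : y ≤ -(y - 2 * round (y / 2))).trans (neg_le_abs _)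

lemma fold_two_mul_int_add {y : ℝ} (hy : y ∈ Icc (0 : ℝ) 1) (n : ℤ) : fold (2 * n + y) = y := by
  rw [add_comm, fold_add_two_mul_int, fold_of_mem_Icc hy]

lemma fold_two_mul_int_sub {y : ℝ} (hy : y ∈ Icc (0 : ℝ) 1) (n : ℤ) : fold (2 * n - y) = y := by
  rw [← fold_neg, neg_sub, ← fold_add_two_mul_int _ n, sub_add_cancel, fold_of_mem_Icc hy]

lemma continuous_fold : Continuous fold := lipschitzWith_fold.continuous

lemma uniformContinuous_comp_fold {f : ℝ → ℝ} (hf : ContinuousOn f (Icc 0 1)) :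
    UniformContinuous fun u => f (fold u) :=
  uniformContinuousOn_univ.1 <| (isCompact_Icc.uniformContinuousOn_of_continuous hf).comp
    lipschitzWith_fold.uniformContinuous.uniformContinuousOn fun u _ => fold_mem_Icc u

lemma MeasureTheory.Integrable.hasSum_intervalIntegral_add_mul {G : ℝ → ℝ} (hG : Integrable G)
    (a : ℝ) {p : ℝ} (hp : 0 < p) :
    HasSum (fun n : ℤ => ∫ u in a + n * p..a + n * p + p, G u) (∫ u, G u) := by
  have hIoc : ∀ n : ℤ, ∫ u in a + n * p..a + n * p + p, G u =
      ∫ u in Ioc (a + n • p) (a + (n + 1) • p), G u := fun n => by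
    rw [intervalIntegral.integral_of_le (by linarith), zsmul_eq_mul, zsmul_eq_mul]
    push_cast
    ring_nf
  rw [funext hIoc, ← setIntegral_univ, ← iUnion_Ioc_add_zsmul hp a]
  exact hasSum_integral_iUnion (fun _ => measurableSet_Ioc) (pairwise_disjoint_Ioc_add_zsmul a p)
    hG.integrableOn

section Images

variable {h f : ℝ → ℝ}

lemma intervalIntegral_mul_comp_fold (hh : Continuous h) (hf : ContinuousOn f (Icc 0 1))
    (x : ℝ) (n : ℤ) :
    ∫ u in x + 2 * n - 1..x + 2 * n + 1, h u * f (fold (x - u)) =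
      ∫ y in (0 : ℝ)..1, (h (x - y + 2 * n) + h (x + y + 2 * n)) * f y := by
  set c := x + 2 * (n : ℝ) with hc
  set G := fun u => h u * f (fold (x - u))
  have hG : Continuous G :=
    hh.mul (hf.comp_continuous (continuous_fold.comp (by fun_prop)) fun u => fold_mem_Icc _)
  calc ∫ u in c - 1..c + 1, G u = (∫ u in c - 1..c, G u) + ∫ u in c..c + 1, G u :=
        (intervalIntegral.integral_add_adjacent_intervals (hG.intervalIntegrable _ _)
          (hG.intervalIntegrable _ _)).symm
    _ = (∫ y in (0 : ℝ)..1, G (c - y)) + ∫ y in (0 : ℝ)..1, G (y + c) := by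
        rw [intervalIntegral.integral_comp_sub_left, intervalIntegral.integral_comp_add_right,
          sub_zero, zero_add, add_comm 1 c]
    _ = ∫ y in (0 : ℝ)..1, (G (c - y) + G (y + c)) :=
        (intervalIntegral.integral_add ((hG.comp (by fun_prop)).intervalIntegrable _ _)
          ((hG.comp (by fun_prop)).intervalIntegrable _ _)).symm
    _ = _ := intervalIntegral.integral_congr fun y hy => by
        rw [uIcc_of_le zero_le_one] at hy
        have h₁ : x - (c - y) = 2 * ((-n : ℤ) : ℝ) + y := by push_cast; ring
        have h₂ : x - (y + c) = 2 * ((-n : ℤ) : ℝ) - y := by push_cast; ring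
        simp only [G, h₁, h₂, fold_two_mul_int_add hy, fold_two_mul_int_sub hy]
        rw [add_mul, hc, show x + 2 * n - y = x - y + 2 * n by ring, add_comm y]
        ring_nf

lemma hasSum_intervalIntegral_images_mul (hh : Continuous h) (hi : Integrable h)
    (hf : ContinuousOn f (Icc 0 1)) (x : ℝ) :
    HasSum (fun n : ℤ => ∫ y in (0 : ℝ)..1, (h (x - y + 2 * n) + h (x + y + 2 * n)) * f y)
      (∫ u, h u * f (fold (x - u))) := by
  obtain ⟨M, hM⟩ := isCompact_Icc.exists_bound_of_continuousOn hf
  have hG : Integrable fun u => h u * f (fold (x - u)) :=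
    hi.mul_bdd ((hf.comp_continuous (continuous_fold.comp (by fun_prop))
      fun u => fold_mem_Icc _).aestronglyMeasurable) (ae_of_all _ fun u => hM _ (fold_mem_Icc _))
  convert hG.hasSum_intervalIntegral_add_mul (x - 1) two_pos using 2 with n
  rw [← intervalIntegral_mul_comp_fold hh hf]
  congr 1 <;> ring

theorem intervalIntegral_tsum_images_mul (hh : Continuous h) (hi : Integrable h)
    (hf : ContinuousOn f (Icc 0 1)) (x : ℝ) :
    ∫ y in (0 : ℝ)..1, (∑' n : ℤ, (h (x - y + 2 * n) + h (x + y + 2 * n))) * f y =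
      ∫ u, h u * f (fold (x - u)) := by
  set K := fun (n : ℤ) y => h (x - y + 2 * n) + h (x + y + 2 * n)
  have hKf : ∀ n, IntegrableOn (fun y => K n y * f y) (Ioc 0 1) := fun n =>
    ((by fun_prop : Continuous (K n)).continuousOn.mul hf).integrableOn_Icc.mono_set
      Ioc_subset_Icc_self
  have hnorm : Summable fun n => ∫ y in Ioc 0 1, ‖K n y * f y‖ := by
    refine .of_nonneg_of_le (fun n => integral_nonneg fun y => norm_nonneg _) (fun n => ?_)
      (hasSum_intervalIntegral_images_mul hh.abs hi.abs hf.abs x).summable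
    rw [intervalIntegral.integral_of_le zero_le_one]
    refine setIntegral_mono_on (hKf n).norm ?_ measurableSet_Ioc fun y _ => ?_
    · exact ((by fun_prop : Continuous fun y => |h (x - y + 2 * n)| + |h (x + y + 2 * n)|
        ).continuousOn.mul hf.abs).integrableOn_Icc.mono_set Ioc_subset_Icc_self
    · rw [norm_mul, Real.norm_eq_abs]
      exact mul_le_mul_of_nonneg_right (abs_add_le _ _) (abs_nonneg _)
  calc ∫ y in (0 : ℝ)..1, (∑' n, K n y) * f y = ∫ y in Ioc 0 1, ∑' n, K n y * f y := by
        simp only [intervalIntegral.integral_of_le zero_le_one, tsum_mul_right]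
    _ = ∑' n, ∫ y in Ioc 0 1, K n y * f y :=
        (integral_tsum_of_summable_integral_norm hKf hnorm).symm
    _ = ∫ u, h u * f (fold (x - u)) := by
        simpa only [intervalIntegral.integral_of_le zero_le_one] using
          (hasSum_intervalIntegral_images_mul hh hi hf x).tsum_eq

end Images

open ProbabilityTheory
open scoped NNReal

lemma gaussD_eq_gaussianPDFReal {t : ℝ} (ht : 0 ≤ t) :
    gaussD t = gaussianPDFReal 0 t.toNNReal := by
  ext x
  rw [gaussD, gaussianPDFReal, Real.coe_toNNReal t ht, neg_div, Real.rpow_neg (by positivity),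
    ← Real.sqrt_eq_rpow, sub_zero]

lemma Pt_eq_integral_gaussianReal {t : ℝ} (ht : 0 < t) {f : ℝ → ℝ}
    (hf : ContinuousOn f (Icc 0 1)) (x : ℝ) :
    Pt t f x = ∫ u, f (fold (x - u)) ∂gaussianReal 0 t.toNNReal := by
  have hg := gaussD_eq_gaussianPDFReal ht.le
  rw [Pt, if_neg ht.ne', integral_gaussianReal_eq_integral_smul (by simpa using ht), ← hg]
  exact intervalIntegral_tsum_images_mul (by rw [hg, gaussianPDFReal_def]; fun_prop)
    (hg ▸ integrable_gaussianPDFReal 0 _) hf x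

lemma integral_sq_gaussianReal (v : ℝ≥0) : ∫ u, u ^ 2 ∂gaussianReal 0 v = v := by
  rw [← variance_of_integral_eq_zero aemeasurable_id' integral_id_gaussianReal,
    variance_fun_id_gaussianReal]

lemma exists_abs_integral_gaussianReal_comp_sub_sub_lt {F : ℝ → ℝ} (hF : UniformContinuous F)
    {M : ℝ} (hM : ∀ v, |F v| ≤ M) {ε : ℝ} (hε : 0 < ε) :
    ∃ δ > 0, ∀ v : ℝ≥0, (v : ℝ) < δ → ∀ x, |∫ u, F (x - u) ∂gaussianReal 0 v - F x| < ε := by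
  obtain ⟨η, hη, hFη⟩ := Metric.uniformContinuous_iff.1 hF (ε / 2) (half_pos hε)
  have hM0 : 0 ≤ M := (abs_nonneg _).trans (hM 0)
  refine ⟨ε * η ^ 2 / (4 * (M + 1)), by positivity, fun v hv x => ?_⟩
  -- A quadratic majorant, so that the tail is paid for by the variance `v`.
  have hpt : ∀ u, |F (x - u) - F x| ≤ ε / 2 + 2 * M / η ^ 2 * u ^ 2 := fun u => by
    rcases lt_or_ge |u| η with hu | hu
    · have := hFη (show dist (x - u) x < η by rwa [Real.dist_eq, sub_sub_cancel_left, abs_neg])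
      rw [Real.dist_eq] at this
      linarith [show 0 ≤ 2 * M / η ^ 2 * u ^ 2 by positivity]
    · have h1 : 1 ≤ u ^ 2 / η ^ 2 := by
        rw [le_div_iff₀ (by positivity), one_mul, ← sq_abs u]
        gcongr
      calc |F (x - u) - F x| ≤ |F (x - u)| + |F x| := abs_sub _ _
        _ ≤ 2 * M * 1 := by linarith [hM (x - u), hM x]
        _ ≤ 2 * M * (u ^ 2 / η ^ 2) := by gcongr
        _ = 2 * M / η ^ 2 * u ^ 2 := by ring
        _ ≤ ε / 2 + 2 * M / η ^ 2 * u ^ 2 := le_add_of_nonneg_left (half_pos hε).le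
  have hFx : Integrable (fun u => F (x - u)) (gaussianReal 0 v) :=
    .of_bound (hF.continuous.comp (by fun_prop)).aestronglyMeasurable M (ae_of_all _ fun u => hM _)
  have hI : Integrable (fun u => F (x - u) - F x) (gaussianReal 0 v) :=
    hFx.sub (integrable_const _)
  have hsq : Integrable (fun u : ℝ => u ^ 2) (gaussianReal 0 v) :=
    (memLp_id_gaussianReal' 2 (by norm_num)).integrable_sq
  have hsmall : 2 * M / η ^ 2 * v < ε / 2 := by
    rw [lt_div_iff₀ (by positivity)] at hv
    rw [div_mul_eq_mul_div, div_lt_iff₀ (by positivity)]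
    nlinarith [v.2]
  calc |∫ u, F (x - u) ∂gaussianReal 0 v - F x| = |∫ u, F (x - u) - F x ∂gaussianReal 0 v| := by
        rw [integral_sub hFx (integrable_const _), integral_const]
        simp
    _ ≤ ∫ u, |F (x - u) - F x| ∂gaussianReal 0 v := abs_integral_le_integral_abs
    _ ≤ ∫ u, ε / 2 + 2 * M / η ^ 2 * u ^ 2 ∂gaussianReal 0 v :=
        integral_mono hI.abs ((integrable_const _).add (hsq.const_mul _)) hpt
    _ = ε / 2 + 2 * M / η ^ 2 * v := by
        rw [integral_add (integrable_const _) (hsq.const_mul _), integral_const_mul,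
          integral_sq_gaussianReal]
        simp
    _ < ε := by linarith

/-- strong continuity of the Neumann heat semigroup on `C([0,1])`:
`P_t f → f` uniformly on `[0,1]` as `t ↓ 0`. -/
theorem heat_semigroup_strong_continuity :
    ∀ f : ℝ → ℝ, ContinuousOn f (Set.Icc (0:ℝ) 1) →
      ∀ ε > (0:ℝ), ∃ δ > (0:ℝ), ∀ t ∈ Set.Ioo (0:ℝ) δ, ∀ x ∈ Set.Icc (0:ℝ) 1,
        |Pt t f x - f x| < ε := by
  intro f hf ε hε
  obtain ⟨M, hM⟩ := isCompact_Icc.exists_bound_of_continuousOn hf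
  obtain ⟨δ, hδ, hgauss⟩ := exists_abs_integral_gaussianReal_comp_sub_sub_lt
    (uniformContinuous_comp_fold hf) (fun v => hM _ (fold_mem_Icc v)) hε
  refine ⟨δ, hδ, fun t ⟨ht0, htδ⟩ x hx => ?_⟩
  have := hgauss t.toNNReal (by rwa [Real.coe_toNNReal t ht0.le]) x
  rwa [fold_of_mem_Icc hx, ← Pt_eq_integral_gaussianReal ht0 hf x] at this
end
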